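/- arXiv:1310.0472 — 2 statements merged into one kernel-verified Lean document; each statement's English description precedes it below -/
import Mathlib

section
/- For the slicer map S_α with 0 < α, the travelling areas satisfy A_n = ℓ_{n−1}(α) = (n − 1 + 2^{1/α})^{−α} = A_{−n} for all n ≥ 1, where A_j is the measure of the portion of the initial cell found in cell j at time n. -/
/-!
Every point keeps its abscissa, and since `ℓ_0 = 1/2` the first step sends `[0, 1/2)` down and
`[1/2, 1]` up. Because `ℓ_k` decreases in `|k|` and stays below `1/2`, a point that has gone
straight down for `k + 1` steps is still in the lower slice of cell `-(k+1)` iff `x < ℓ_{k+1}`,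
and one that has gone straight up is still outside the middle slice of cell `k+1` iff it is `1/2`
or `x > 1 - ℓ_{k+1}`. So after `n` steps cell `-n` holds `[0, ℓ_{n-1})` and cell `n` holds
`{1/2} ∪ (1 - ℓ_{n-1}, 1]`, both of measure `ℓ_{n-1}`.
-/

open MeasureTheory

noncomputable def slicer (ℓ : ℤ → ℝ) : ℝ × ℤ → ℝ × ℤ :=
  fun p => if (0 ≤ p.1 ∧ p.1 < ℓ p.2) ∨ (1/2 < p.1 ∧ p.1 ≤ 1 - ℓ p.2)
    then (p.1, p.2 - 1) else (p.1, p.2 + 1)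

noncomputable def ella (α : ℝ) (m : ℤ) : ℝ :=
  (((|m| : ℤ) : ℝ) + (2:ℝ) ^ (1/α)) ^ (-α)

noncomputable def slicerA (α : ℝ) (n : ℕ) (j : ℤ) : ℝ :=
  (volume {x : ℝ | x ∈ Set.Icc (0:ℝ) 1 ∧ ((slicer (ella α))^[n] (x, 0)).2 = j}).toReal

open Set

def SlicesDown (ℓ : ℤ → ℝ) (p : ℝ × ℤ) : Prop :=
  (0 ≤ p.1 ∧ p.1 < ℓ p.2) ∨ (1/2 < p.1 ∧ p.1 ≤ 1 - ℓ p.2)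

section Slicer

variable (ℓ : ℤ → ℝ)

lemma slicer_of_slicesDown {p : ℝ × ℤ} (h : SlicesDown ℓ p) :
    slicer ℓ p = (p.1, p.2 - 1) :=
  if_pos h

lemma slicer_of_not_slicesDown {p : ℝ × ℤ} (h : ¬SlicesDown ℓ p) :
    slicer ℓ p = (p.1, p.2 + 1) :=
  if_neg h

lemma slicer_fst (p : ℝ × ℤ) : (slicer ℓ p).1 = p.1 := by
  by_cases h : SlicesDown ℓ p
  · rw [slicer_of_slicesDown ℓ h]
  · rw [slicer_of_not_slicesDown ℓ h]

lemma iterate_slicer_fst (k : ℕ) (p : ℝ × ℤ) : ((slicer ℓ)^[k] p).1 = p.1 := by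
  induction k with
  | zero => rfl
  | succ k ih => rw [Function.iterate_succ_apply', slicer_fst, ih]

lemma abs_iterate_slicer_snd_sub_le (k : ℕ) (p : ℝ × ℤ) :
    |((slicer ℓ)^[k] p).2 - p.2| ≤ k := by
  induction k with
  | zero => simp
  | succ k ih =>
    rw [Function.iterate_succ_apply']
    set q := (slicer ℓ)^[k] p
    rw [abs_le] at ih ⊢
    by_cases h : SlicesDown ℓ q
    · rw [slicer_of_slicesDown ℓ h]; push_cast; omega
    · rw [slicer_of_not_slicesDown ℓ h]; push_cast; omega

lemma iterate_slicer_snd_eq_succ_iff (k : ℕ) (x : ℝ) :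
    ((slicer ℓ)^[k + 1] (x, 0)).2 = k + 1 ↔
      ((slicer ℓ)^[k] (x, 0)).2 = k ∧ ¬SlicesDown ℓ (x, k) := by
  have hfst := iterate_slicer_fst ℓ k (x, 0)
  have hbound := abs_le.mp (abs_iterate_slicer_snd_sub_le ℓ k (x, 0))
  rw [Function.iterate_succ_apply']
  generalize (slicer ℓ)^[k] (x, 0) = q at hfst hbound ⊢
  obtain ⟨y, m⟩ := q
  obtain rfl : y = x := hfst
  simp only [sub_zero] at hbound
  by_cases h : SlicesDown ℓ (y, m)
  · rw [slicer_of_slicesDown ℓ h]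
    constructor
    · intro e; simp only at e; omega
    · rintro ⟨rfl, h'⟩; exact absurd h h'
  · rw [slicer_of_not_slicesDown ℓ h]
    constructor
    · intro e; simp only at e
      obtain rfl : m = k := by omega
      exact ⟨rfl, h⟩
    · rintro ⟨rfl, -⟩; rfl

lemma iterate_slicer_snd_eq_neg_succ_iff (k : ℕ) (x : ℝ) :
    ((slicer ℓ)^[k + 1] (x, 0)).2 = -(k + 1) ↔
      ((slicer ℓ)^[k] (x, 0)).2 = -k ∧ SlicesDown ℓ (x, -k) := by
  have hfst := iterate_slicer_fst ℓ k (x, 0)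
  have hbound := abs_le.mp (abs_iterate_slicer_snd_sub_le ℓ k (x, 0))
  rw [Function.iterate_succ_apply']
  generalize (slicer ℓ)^[k] (x, 0) = q at hfst hbound ⊢
  obtain ⟨y, m⟩ := q
  obtain rfl : y = x := hfst
  simp only [sub_zero] at hbound
  by_cases h : SlicesDown ℓ (y, m)
  · rw [slicer_of_slicesDown ℓ h]
    constructor
    · intro e; simp only at e
      obtain rfl : m = -k := by omega
      exact ⟨rfl, h⟩
    · rintro ⟨rfl, -⟩; simp only; ring
  · rw [slicer_of_not_slicesDown ℓ h]
    constructor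
    · intro e; simp only at e; omega
    · rintro ⟨rfl, h'⟩; exact absurd h' h

end Slicer

section Profile

variable {ℓ : ℤ → ℝ}

lemma le_half_of_antitone (h0 : ℓ 0 = 1/2) (hanti : Antitone fun k : ℕ => ℓ k) (k : ℕ) :
    ℓ k ≤ 1/2 := by
  simpa [h0] using hanti (Nat.zero_le k)

lemma iterate_slicer_snd_eq_succ_iff_of_antitone (h0 : ℓ 0 = 1/2)
    (hanti : Antitone fun k : ℕ => ℓ k) {x : ℝ} (hx : 0 ≤ x) (k : ℕ) :
    ((slicer ℓ)^[k + 1] (x, 0)).2 = k + 1 ↔ x = 1/2 ∨ 1 - ℓ k < x := by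
  induction k with
  | zero =>
    rw [iterate_slicer_snd_eq_succ_iff ℓ 0 x]
    simp only [SlicesDown, Nat.cast_zero, h0]
    constructor
    · rintro ⟨-, h⟩
      rcases (not_lt.mp fun h' => h (Or.inl ⟨hx, h'⟩)).eq_or_lt with h' | h'
      · exact Or.inl h'.symm
      · exact Or.inr (by linarith)
    · rintro (h | h) <;> refine ⟨rfl, ?_⟩ <;> rintro (⟨-, h'⟩ | ⟨h', h''⟩) <;> linarith
  | succ k ih =>
    have hle : ℓ (k + 1) ≤ ℓ k := by exact_mod_cast hanti (Nat.le_succ k)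
    have hhalf : ℓ k ≤ 1/2 := le_half_of_antitone h0 hanti k
    have hstep := iterate_slicer_snd_eq_succ_iff ℓ (k + 1) x
    push_cast at hstep ⊢
    rw [hstep, ih]
    simp only [SlicesDown]
    constructor
    · rintro ⟨h | h, hnot⟩
      · exact Or.inl h
      · exact Or.inr (not_le.mp fun h' => hnot (Or.inr ⟨by linarith, h'⟩))
    · rintro (h | h)
      · refine ⟨Or.inl h, ?_⟩
        rintro (⟨-, h'⟩ | ⟨h', -⟩) <;> linarith
      · refine ⟨Or.inr (by linarith), ?_⟩
        rintro (⟨-, h'⟩ | ⟨-, h'⟩) <;> linarith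

lemma iterate_slicer_snd_eq_neg_succ_iff_of_antitone (h0 : ℓ 0 = 1/2)
    (hanti : Antitone fun k : ℕ => ℓ k) (heven : ∀ m, ℓ (-m) = ℓ m) {x : ℝ} (hx : 0 ≤ x)
    (k : ℕ) :
    ((slicer ℓ)^[k + 1] (x, 0)).2 = -(k + 1) ↔ x < ℓ k := by
  induction k with
  | zero =>
    rw [iterate_slicer_snd_eq_neg_succ_iff ℓ 0 x]
    simp only [SlicesDown, Nat.cast_zero, neg_zero, h0]
    constructor
    · rintro ⟨-, ⟨-, h⟩ | ⟨h, h'⟩⟩ <;> linarith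
    · intro h; exact ⟨rfl, Or.inl ⟨hx, h⟩⟩
  | succ k ih =>
    have hle : ℓ (k + 1) ≤ ℓ k := by exact_mod_cast hanti (Nat.le_succ k)
    have hhalf : ℓ k ≤ 1/2 := le_half_of_antitone h0 hanti k
    have hstep := iterate_slicer_snd_eq_neg_succ_iff ℓ (k + 1) x
    push_cast at hstep ⊢
    rw [hstep, ih]
    simp only [SlicesDown, heven]
    constructor
    · rintro ⟨h, ⟨-, h'⟩ | ⟨h', -⟩⟩
      · exact h'
      · linarith
    · intro h; exact ⟨by linarith, Or.inl ⟨hx, h⟩⟩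

lemma volume_setOf_iterate_slicer_snd_eq_succ (h0 : ℓ 0 = 1/2)
    (hanti : Antitone fun k : ℕ => ℓ k) (k : ℕ) :
    volume {x : ℝ | x ∈ Icc (0:ℝ) 1 ∧ ((slicer ℓ)^[k + 1] (x, 0)).2 = k + 1} =
      ENNReal.ofReal (ℓ k) := by
  have hhalf := le_half_of_antitone h0 hanti k
  have hset : {x : ℝ | x ∈ Icc (0:ℝ) 1 ∧ ((slicer ℓ)^[k + 1] (x, 0)).2 = k + 1} =
      insert (1/2) (Ioc (1 - ℓ k) 1) := by
    ext x
    simp only [mem_ofPred_eq, mem_Icc, mem_insert_iff, mem_Ioc]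
    constructor
    · rintro ⟨⟨hx0, hx1⟩, h⟩
      rcases (iterate_slicer_snd_eq_succ_iff_of_antitone h0 hanti hx0 k).1 h with h | h
      · exact Or.inl h
      · exact Or.inr ⟨h, hx1⟩
    · rintro (rfl | ⟨h, hx1⟩)
      · exact ⟨⟨by norm_num, by norm_num⟩,
          (iterate_slicer_snd_eq_succ_iff_of_antitone h0 hanti (by norm_num) k).2 (Or.inl rfl)⟩
      · have hx0 : 0 ≤ x := by linarith
        exact ⟨⟨hx0, hx1⟩, (iterate_slicer_snd_eq_succ_iff_of_antitone h0 hanti hx0 k).2 (Or.inr h)⟩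
  rw [hset, measure_congr (insert_ae_eq_self _ _), Real.volume_Ioc, sub_sub_cancel]

lemma volume_setOf_iterate_slicer_snd_eq_neg_succ (h0 : ℓ 0 = 1/2)
    (hanti : Antitone fun k : ℕ => ℓ k) (heven : ∀ m, ℓ (-m) = ℓ m) (k : ℕ) :
    volume {x : ℝ | x ∈ Icc (0:ℝ) 1 ∧ ((slicer ℓ)^[k + 1] (x, 0)).2 = -(k + 1)} =
      ENNReal.ofReal (ℓ k) := by
  have hhalf := le_half_of_antitone h0 hanti k
  have hset : {x : ℝ | x ∈ Icc (0:ℝ) 1 ∧ ((slicer ℓ)^[k + 1] (x, 0)).2 = -(k + 1)} =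
      Ico 0 (ℓ k) := by
    ext x
    simp only [mem_ofPred_eq, mem_Icc, mem_Ico]
    constructor
    · rintro ⟨⟨hx0, -⟩, h⟩
      exact ⟨hx0, (iterate_slicer_snd_eq_neg_succ_iff_of_antitone h0 hanti heven hx0 k).1 h⟩
    · rintro ⟨hx0, h⟩
      exact ⟨⟨hx0, by linarith⟩,
        (iterate_slicer_snd_eq_neg_succ_iff_of_antitone h0 hanti heven hx0 k).2 h⟩
  rw [hset, Real.volume_Ico, sub_zero]

end Profile

lemma ella_natCast (α : ℝ) (k : ℕ) : ella α k = ((k:ℝ) + 2 ^ (1/α)) ^ (-α) := by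
  simp [ella]

lemma ella_neg (α : ℝ) (m : ℤ) : ella α (-m) = ella α m := by
  rw [ella, ella, abs_neg]

lemma ella_nonneg (α : ℝ) (m : ℤ) : 0 ≤ ella α m := by
  unfold ella; positivity

lemma ella_zero {α : ℝ} (hα : α ≠ 0) : ella α 0 = 1/2 := by
  rw [ella, abs_zero, Int.cast_zero, zero_add, ← Real.rpow_mul zero_le_two,
    one_div_mul_eq_div, neg_div, div_self hα, Real.rpow_neg_one, one_div]

lemma antitone_ella_natCast {α : ℝ} (hα : 0 < α) : Antitone fun k : ℕ => ella α k := by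
  intro j k hjk
  simp only [ella_natCast]
  apply Real.rpow_le_rpow_of_nonpos (by positivity) _ (neg_nonpos.mpr hα.le)
  gcongr

/-- for `α > 0` the travelling areas satisfy
`A_n = ℓ_{n-1}(α) = (n - 1 + 2^{1/α})^{-α} = A_{-n}` for all `n ≥ 1`. -/
theorem travelling_areas (α : ℝ) (hα : 0 < α) (n : ℕ) (hn : 1 ≤ n) :
    slicerA α n (n:ℤ) = ella α ((n:ℤ) - 1) ∧
    ella α ((n:ℤ) - 1) = ((n:ℝ) - 1 + (2:ℝ) ^ (1/α)) ^ (-α) ∧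
    slicerA α n (-(n:ℤ)) = ella α ((n:ℤ) - 1) := by
  obtain ⟨k, rfl⟩ := Nat.exists_eq_add_of_le' hn
  have h0 := ella_zero hα.ne'
  have hanti := antitone_ella_natCast hα
  have hk : ((k + 1 : ℕ) : ℤ) - 1 = k := by push_cast; ring
  rw [hk]
  refine ⟨?_, ?_, ?_⟩
  · rw [slicerA, Nat.cast_add, Nat.cast_one, volume_setOf_iterate_slicer_snd_eq_succ h0 hanti,
      ENNReal.toReal_ofReal (ella_nonneg α k)]
  · rw [ella_natCast]; push_cast; ring_nf
  · rw [slicerA, Nat.cast_add, Nat.cast_one,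
      volume_setOf_iterate_slicer_snd_eq_neg_succ h0 hanti (ella_neg α),
      ENNReal.toReal_ofReal (ella_nonneg α k)]
end

section
/- For α ∈ (0,2] and integer p ≥ 3, the function f(x) = [(x+1)^p − x^p] / (2x + 1 + 2^{1/α})^α is increasing for x > 0. -/
/-!
Write `N x = (x + 1) ^ p - x ^ p` and `D x = 2 * x + 1 + 2 ^ (1 / α)`. The derivative of `N / D ^ α`
has the sign of `N' D - 2 α N`. Since `2 ^ (1 / α) ≥ 1` we have `D ≥ 2 (x + 1)`, and `α ≤ 2`, so it
suffices that `2 N ≤ (x + 1) N'`. With `a = x + 1` and `b = x` this reads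
`2 (a ^ p - b ^ p) ≤ p a (a ^ (p - 1) - b ^ (p - 1))`, which for `p ≥ 3` follows from the
tangent-line bound `a ^ (p - 1) - b ^ (p - 1) ≥ (p - 1) b ^ (p - 2)`.
-/

open Set Real

section PowSubPow

variable {R : Type*} [CommRing R] [LinearOrder R] [IsStrictOrderedRing R]

lemma natCast_add_one_mul_pow_mul_sub_le_pow_sub_pow {a b : R} (hb : 0 ≤ b) (hab : b ≤ a)
    (m : ℕ) : (m + 1) * b ^ m * (a - b) ≤ a ^ (m + 1) - b ^ (m + 1) := by
  induction m with
  | zero => simp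
  | succ m ih =>
    calc ((m + 1 : ℕ) + 1 : R) * b ^ (m + 1) * (a - b)
        = b * ((m + 1) * b ^ m * (a - b)) + b ^ (m + 1) * (a - b) := by push_cast; ring
      _ ≤ a * (a ^ (m + 1) - b ^ (m + 1)) + b ^ (m + 1) * (a - b) := by
          gcongr
          exact hb.trans hab
      _ = a ^ (m + 1 + 1) - b ^ (m + 1 + 1) := by ring

lemma two_mul_add_one_pow_sub_pow_le {x : R} (hx : 0 ≤ x) {n : ℕ} (hn : 2 ≤ n) :
    2 * ((x + 1) ^ (n + 1) - x ^ (n + 1)) ≤ (n + 1) * (x + 1) * ((x + 1) ^ n - x ^ n) := by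
  obtain ⟨m, rfl⟩ : ∃ m, n = m + 2 := ⟨n - 2, by omega⟩
  set T := (x + 1) ^ (m + 2) - x ^ (m + 2)
  have htangent : (m + 2) * x ^ (m + 1) ≤ T := by
    have := natCast_add_one_mul_pow_mul_sub_le_pow_sub_pow hx (le_add_of_nonneg_right zero_le_one)
      (m + 1)
    push_cast at this
    linarith
  have hm : (0 : R) ≤ m := m.cast_nonneg
  calc 2 * ((x + 1) ^ (m + 2 + 1) - x ^ (m + 2 + 1))
      = 2 * (x + 1) * T + 2 * x * x ^ (m + 1) := by ring
    _ ≤ 2 * (x + 1) * T + (m + 1) * x * ((m + 2) * x ^ (m + 1)) := by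
        have hX : 0 ≤ x * x ^ (m + 1) := by positivity
        nlinarith [mul_nonneg (mul_nonneg hm (by positivity : (0 : R) ≤ m + 3)) hX]
    _ ≤ 2 * (x + 1) * T + (m + 1) * (x + 1) * T := by
        gcongr ?_ + ?_
        · rfl
        · exact mul_le_mul (by gcongr; linarith) htangent (by positivity) (by positivity)
    _ = ((m + 2 : ℕ) + 1) * (x + 1) * T := by push_cast; ring

end PowSubPow

lemma hasDerivAt_add_one_pow_sub_pow (n : ℕ) (x : ℝ) :
    HasDerivAt (fun x => (x + 1) ^ (n + 1) - x ^ (n + 1)) ((n + 1) * ((x + 1) ^ n - x ^ n)) x := by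
  refine ((((hasDerivAt_id' x).add_const 1).fun_pow (n + 1)).fun_sub
    (hasDerivAt_pow (n + 1) x)).congr_deriv ?_
  push_cast
  ring

lemma monotoneOn_div_rpow_of_hasDerivAt {s : Set ℝ} (hs : Convex ℝ s) {N D N' D' : ℝ → ℝ}
    {α : ℝ} (hN : ∀ x ∈ s, HasDerivAt N (N' x) x) (hD : ∀ x ∈ s, HasDerivAt D (D' x) x)
    (hDpos : ∀ x ∈ s, 0 < D x) (h : ∀ x ∈ interior s, α * D' x * N x ≤ N' x * D x) :
    MonotoneOn (fun x => N x / D x ^ α) s := by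
  have hder : ∀ x ∈ s, HasDerivAt (fun x => N x / D x ^ α)
      ((N' x * D x ^ α - N x * (D' x * α * D x ^ (α - 1))) / (D x ^ α) ^ 2) x := fun x hx =>
    (hN x hx).div ((hD x hx).rpow_const (Or.inl (hDpos x hx).ne'))
      (rpow_pos_of_pos (hDpos x hx) _).ne'
  refine monotoneOn_of_deriv_nonneg hs (fun x hx => (hder x hx).continuousAt.continuousWithinAt)
    (fun x hx => (hder x (interior_subset hx)).differentiableAt.differentiableWithinAt)
    fun x hx => ?_
  have hDx := hDpos x (interior_subset hx)
  have hfactor : N' x * D x ^ α - N x * (D' x * α * D x ^ (α - 1)) =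
      D x ^ (α - 1) * (N' x * D x - α * D' x * N x) := by
    rw [rpow_sub_one hDx.ne']
    field_simp
  rw [(hder x (interior_subset hx)).deriv, hfactor]
  exact div_nonneg (mul_nonneg (rpow_nonneg hDx.le _) (sub_nonneg.2 (h x hx))) (sq_nonneg _)

/-- for `α ∈ (0,2]` and integer `p ≥ 3`, the function
`f(x) = [(x+1)^p - x^p] / (2x + 1 + 2^{1/α})^α` is increasing for `x > 0`. -/
theorem f_monotoneOn (α : ℝ) (hα : α ∈ Set.Ioc (0:ℝ) 2) (p : ℕ) (hp : 3 ≤ p) :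
    MonotoneOn (fun x : ℝ => ((x + 1)^p - x^p) / (2*x + 1 + (2:ℝ)^(1/α)) ^ α)
      (Set.Ioi (0:ℝ)) := by
  obtain ⟨hα0, hα2⟩ := hα
  obtain ⟨n, rfl⟩ : ∃ n, p = n + 1 := ⟨p - 1, by omega⟩
  have hc : 1 ≤ (2:ℝ) ^ (1 / α) := one_le_rpow (by norm_num) (by positivity)
  refine monotoneOn_div_rpow_of_hasDerivAt (convex_Ioi 0) (D' := fun _ => 2)
    (fun x _ => hasDerivAt_add_one_pow_sub_pow n x) (fun x _ => ?_)
    (fun x (hx : 0 < x) => by linarith) ?_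
  · simpa using (((hasDerivAt_id x).const_mul 2).add_const 1).add_const ((2:ℝ) ^ (1 / α))
  rw [interior_Ioi]
  intro x (hx : 0 < x)
  have hN : 0 ≤ (x + 1) ^ (n + 1) - x ^ (n + 1) :=
    sub_nonneg.2 (pow_le_pow_left₀ hx.le (by linarith) _)
  have hN' : 0 ≤ (n + 1) * ((x + 1) ^ n - x ^ n) :=
    mul_nonneg (by positivity) (sub_nonneg.2 (pow_le_pow_left₀ hx.le (by linarith) _))
  calc α * 2 * ((x + 1) ^ (n + 1) - x ^ (n + 1))
      ≤ 2 * (2 * ((x + 1) ^ (n + 1) - x ^ (n + 1))) := by nlinarith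
    _ ≤ (n + 1) * ((x + 1) ^ n - x ^ n) * (2 * (x + 1)) := by
        linarith [two_mul_add_one_pow_sub_pow_le hx.le (by omega : 2 ≤ n)]
    _ ≤ (n + 1) * ((x + 1) ^ n - x ^ n) * (2 * x + 1 + (2:ℝ) ^ (1 / α)) := by
        gcongr
        linarith
end
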